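/- Let $D_\mu = \{(z_1,z_2) \in \mathbb{C}^2 : \mathrm{Re}(z_1 e^{-i\log|z_2|^2}) > 0, \; |\log|z_2|^2| < \mu\}$ with defining function $\rho(z_1,z_2) = -\mathrm{Re}(z_1 e^{-i\log|z_2|^2})$. Then the complex Hessian (Levi form) of $\rho$ satisfies: the Fefferman Monge–Ampère determinant $M(\rho) = -\det\begin{pmatrix}\rho & \rho_{\bar k}\\ \rho_j & \rho_{j\bar k}\end{pmatrix}$ vanishes identically at every boundary point of $D_\mu$ where $z_1 \ne 0$ and $\rho = 0$. -/

import Mathlib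

open Complex

/-- Wirtinger derivative `∂/∂z₁` of a function on `ℂ²`. -/
noncomputable def wd1 (f : ℂ × ℂ → ℂ) (p : ℂ × ℂ) : ℂ :=
  (1 / 2) * (fderiv ℝ f p ((1 : ℂ), (0 : ℂ)) - Complex.I * fderiv ℝ f p (Complex.I, (0 : ℂ)))

/-- Wirtinger derivative `∂/∂z̄₁`. -/
noncomputable def wd1bar (f : ℂ × ℂ → ℂ) (p : ℂ × ℂ) : ℂ :=
  (1 / 2) * (fderiv ℝ f p ((1 : ℂ), (0 : ℂ)) + Complex.I * fderiv ℝ f p (Complex.I, (0 : ℂ)))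

/-- Wirtinger derivative `∂/∂z₂`. -/
noncomputable def wd2 (f : ℂ × ℂ → ℂ) (p : ℂ × ℂ) : ℂ :=
  (1 / 2) * (fderiv ℝ f p ((0 : ℂ), (1 : ℂ)) - Complex.I * fderiv ℝ f p ((0 : ℂ), Complex.I))

/-- Wirtinger derivative `∂/∂z̄₂`. -/
noncomputable def wd2bar (f : ℂ × ℂ → ℂ) (p : ℂ × ℂ) : ℂ :=
  (1 / 2) * (fderiv ℝ f p ((0 : ℂ), (1 : ℂ)) + Complex.I * fderiv ℝ f p ((0 : ℂ), Complex.I))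

/-- Fefferman's Monge–Ampère determinant `M(ρ) = -det [[ρ, ρ_k̄],[ρ_j, ρ_{jk̄}]]`. -/
noncomputable def feffermanMA (ρ : ℂ × ℂ → ℂ) (p : ℂ × ℂ) : ℂ :=
  -Matrix.det
    !![ρ p,      wd1bar ρ p,          wd2bar ρ p;
       wd1 ρ p,  wd1 (wd1bar ρ) p,    wd1 (wd2bar ρ) p;
       wd2 ρ p,  wd2 (wd1bar ρ) p,    wd2 (wd2bar ρ) p]

/-- The defining function `ρ(z₁,z₂) = -Re(z₁ e^{-i log|z₂|²})` of the model worm `D_μ`. -/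
noncomputable def modelRho (z : ℂ × ℂ) : ℂ :=
  ((-(z.1 * Complex.exp (-Complex.I * (Real.log (‖z.2‖ ^ 2) : ℂ))).re : ℝ) : ℂ)

/-!
Write `ρ = -½ (g + ḡ)` with `g = z₁ e^{-i log|z₂|²}`. Near a point with `z₂ ≠ 0`, `log|z₂|²` is
`log z₂ + log z̄₂`, so `g_{z̄₁} = 0`, `g_{z₂} = -i g / z₂` and `g_{z̄₂} = -i g / z̄₂`. Hence
`ρ_{11̄} = 0` and `ρ_{22̄} = -ρ / |z₂|²`, while `|ρ₁|² = 1/4` and `|ρ_{12̄}|² = 1 / (4 |z₂|²)`.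
Expanding the bordered determinant, the two terms containing `ρ₂` and `ρ_{2̄}` cancel, leaving
`M(ρ) = ρ |ρ_{12̄}|² + |ρ₁|² ρ_{22̄} = 0`.
-/

open ComplexConjugate ContinuousLinearMap Topology

noncomputable section

/-- Every `ℝ`-linear map `ℂ² → ℂ` has this form; `a` and `b` are its `∂`- and `∂̄`-coefficients,
which the Wirtinger derivatives read off. -/
def wirtingerCLM (a b : ℂ × ℂ) : ℂ × ℂ →L[ℝ] ℂ :=
  a.1 • fst ℝ ℂ ℂ + a.2 • snd ℝ ℂ ℂ + b.1 • (conjCLE : ℂ →L[ℝ] ℂ).comp (fst ℝ ℂ ℂ) +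
    b.2 • (conjCLE : ℂ →L[ℝ] ℂ).comp (snd ℝ ℂ ℂ)

@[simp]
theorem wirtingerCLM_apply (a b v : ℂ × ℂ) :
    wirtingerCLM a b v = a.1 * v.1 + a.2 * v.2 + b.1 * conj v.1 + b.2 * conj v.2 := by
  simp [wirtingerCLM]

section WirtingerCLM

variable (a b a' b' : ℂ × ℂ)

theorem fst_eq_wirtingerCLM : fst ℝ ℂ ℂ = wirtingerCLM (1, 0) 0 := by
  ext v <;> simp

theorem snd_eq_wirtingerCLM : snd ℝ ℂ ℂ = wirtingerCLM (0, 1) 0 := by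
  ext v <;> simp

theorem wirtingerCLM_add :
    wirtingerCLM a b + wirtingerCLM a' b' = wirtingerCLM (a + a') (b + b') := by
  ext v <;> simp <;> ring

theorem wirtingerCLM_sub :
    wirtingerCLM a b - wirtingerCLM a' b' = wirtingerCLM (a - a') (b - b') := by
  ext v <;> simp <;> ring

theorem smul_wirtingerCLM (c : ℂ) : c • wirtingerCLM a b = wirtingerCLM (c • a) (c • b) := by
  ext v <;> simp <;> ring

theorem conjCLE_comp_wirtingerCLM :
    (conjCLE : ℂ →L[ℝ] ℂ).comp (wirtingerCLM a b) = wirtingerCLM (star b) (star a) := by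
  ext v <;> simp <;> ring

end WirtingerCLM

section WirtingerCalculus

variable {f g : ℂ × ℂ → ℂ} {a b a' b' p : ℂ × ℂ}

theorem HasFDerivAt.wd1_eq (h : HasFDerivAt f (wirtingerCLM a b) p) : wd1 f p = a.1 := by
  simp only [wd1, h.fderiv, wirtingerCLM_apply, map_one, map_zero, conj_I]
  linear_combination (-a.1 / 2 + b.1 / 2) * I_sq

theorem HasFDerivAt.wd1bar_eq (h : HasFDerivAt f (wirtingerCLM a b) p) : wd1bar f p = b.1 := by
  simp only [wd1bar, h.fderiv, wirtingerCLM_apply, map_one, map_zero, conj_I]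
  linear_combination (a.1 / 2 - b.1 / 2) * I_sq

theorem HasFDerivAt.wd2_eq (h : HasFDerivAt f (wirtingerCLM a b) p) : wd2 f p = a.2 := by
  simp only [wd2, h.fderiv, wirtingerCLM_apply, map_one, map_zero, conj_I]
  linear_combination (-a.2 / 2 + b.2 / 2) * I_sq

theorem HasFDerivAt.wd2bar_eq (h : HasFDerivAt f (wirtingerCLM a b) p) : wd2bar f p = b.2 := by
  simp only [wd2bar, h.fderiv, wirtingerCLM_apply, map_one, map_zero, conj_I]
  linear_combination (a.2 / 2 - b.2 / 2) * I_sq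

theorem hasFDerivAt_fst_wirtinger : HasFDerivAt Prod.fst (wirtingerCLM (1, 0) 0) p :=
  fst_eq_wirtingerCLM ▸ hasFDerivAt_fst

theorem hasFDerivAt_snd_wirtinger : HasFDerivAt Prod.snd (wirtingerCLM (0, 1) 0) p :=
  snd_eq_wirtingerCLM ▸ hasFDerivAt_snd

theorem HasFDerivAt.add_wirtinger (hf : HasFDerivAt f (wirtingerCLM a b) p)
    (hg : HasFDerivAt g (wirtingerCLM a' b') p) :
    HasFDerivAt (fun q => f q + g q) (wirtingerCLM (a + a') (b + b')) p :=
  wirtingerCLM_add a b a' b' ▸ hf.add hg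

theorem HasFDerivAt.sub_wirtinger (hf : HasFDerivAt f (wirtingerCLM a b) p)
    (hg : HasFDerivAt g (wirtingerCLM a' b') p) :
    HasFDerivAt (fun q => f q - g q) (wirtingerCLM (a - a') (b - b')) p :=
  wirtingerCLM_sub a b a' b' ▸ hf.sub hg

theorem HasFDerivAt.const_mul_wirtinger (hf : HasFDerivAt f (wirtingerCLM a b) p) (c : ℂ) :
    HasFDerivAt (fun q => c * f q) (wirtingerCLM (c • a) (c • b)) p :=
  smul_wirtingerCLM a b c ▸ hf.const_mul c

theorem HasFDerivAt.mul_wirtinger (hf : HasFDerivAt f (wirtingerCLM a b) p)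
    (hg : HasFDerivAt g (wirtingerCLM a' b') p) :
    HasFDerivAt (fun q => f q * g q) (wirtingerCLM (f p • a' + g p • a) (f p • b' + g p • b)) p :=
  (hf.mul hg).congr_fderiv (by rw [smul_wirtingerCLM, smul_wirtingerCLM, wirtingerCLM_add])

theorem HasFDerivAt.conj_wirtinger (hf : HasFDerivAt f (wirtingerCLM a b) p) :
    HasFDerivAt (fun q => conj (f q)) (wirtingerCLM (star b) (star a)) p :=
  conjCLE_comp_wirtingerCLM a b ▸ (conjCLE : ℂ →L[ℝ] ℂ).hasFDerivAt.comp p hf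

theorem HasDerivAt.comp_wirtinger {h : ℂ → ℂ} {d : ℂ} (hh : HasDerivAt h d (f p))
    (hf : HasFDerivAt f (wirtingerCLM a b) p) :
    HasFDerivAt (fun q => h (f q)) (wirtingerCLM (d • a) (d • b)) p :=
  smul_wirtingerCLM a b d ▸ hh.comp_hasFDerivAt p hf

end WirtingerCalculus

def modelPhase (w : ℂ) : ℂ := exp (-I * (Real.log (‖w‖ ^ 2) : ℂ))

def modelG (z : ℂ × ℂ) : ℂ := z.1 * modelPhase z.2

theorem modelRho_eq : modelRho = fun z => (-1 / 2 : ℂ) * (modelG z + conj (modelG z)) := by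
  ext z
  rw [modelRho, ofReal_neg, re_eq_add_conj, modelG, modelPhase]
  ring

theorem ofReal_log_sq_norm (w : ℂ) : (Real.log (‖w‖ ^ 2) : ℂ) = log (w * conj w) := by
  rw [mul_conj', ← ofReal_pow, ofReal_log (by positivity)]

section ModelDerivatives

variable {p : ℂ × ℂ}

theorem eventually_snd_ne (hp : p.2 ≠ 0) : ∀ᶠ q in 𝓝 p, q.2 ≠ 0 :=
  continuous_snd.continuousAt.eventually_ne hp

theorem hasFDerivAt_log_sq_norm_snd (hp : p.2 ≠ 0) :
    HasFDerivAt (fun z : ℂ × ℂ => (Real.log (‖z.2‖ ^ 2) : ℂ))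
      (wirtingerCLM (0, p.2⁻¹) (0, (conj p.2)⁻¹)) p := by
  have hslit : p.2 * conj p.2 ∈ slitPlane := by
    rw [mul_conj', ← ofReal_pow]
    exact ofReal_mem_slitPlane.2 (by positivity)
  have hconj : conj p.2 ≠ 0 := (map_ne_zero _).2 hp
  simp only [ofReal_log_sq_norm]
  refine ((hasStrictDerivAt_log hslit).hasDerivAt.comp_wirtinger
    (hasFDerivAt_snd_wirtinger.mul_wirtinger hasFDerivAt_snd_wirtinger.conj_wirtinger))
    |>.congr_fderiv ?_
  congr 1 <;> ext <;>
    simp only [Prod.smul_fst, Prod.smul_snd, Prod.fst_star, Prod.snd_star, Prod.smul_mk, star_zero,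
      star_one, smul_zero, smul_eq_mul, mul_zero, mul_one, zero_add, add_zero] <;>
    field_simp

theorem hasFDerivAt_modelPhase_snd (hp : p.2 ≠ 0) :
    HasFDerivAt (fun z : ℂ × ℂ => modelPhase z.2)
      (wirtingerCLM (0, -I * modelPhase p.2 / p.2) (0, -I * modelPhase p.2 / conj p.2)) p := by
  refine ((hasDerivAt_exp _).comp_wirtinger
    ((hasFDerivAt_log_sq_norm_snd hp).const_mul_wirtinger (-I))).congr_fderiv ?_
  congr 1 <;> ext <;>
    simp only [modelPhase, Prod.smul_mk, smul_eq_mul, mul_zero] <;>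
    ring

theorem hasFDerivAt_modelG (hp : p.2 ≠ 0) :
    HasFDerivAt modelG
      (wirtingerCLM (modelPhase p.2, -I * modelG p / p.2) (0, -I * modelG p / conj p.2)) p := by
  refine (hasFDerivAt_fst_wirtinger.mul_wirtinger (hasFDerivAt_modelPhase_snd hp)).congr_fderiv ?_
  congr 1 <;> ext <;>
    simp only [modelG, Prod.smul_mk, Prod.mk_add_mk, smul_zero, smul_eq_mul, mul_zero, mul_one,
      zero_add, add_zero] <;>
    ring

theorem hasFDerivAt_modelRho (hp : p.2 ≠ 0) :
    HasFDerivAt modelRho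
      (wirtingerCLM (-(1 / 2) * modelPhase p.2, I / 2 * (modelG p - conj (modelG p)) / p.2)
        (-(1 / 2) * conj (modelPhase p.2), I / 2 * (modelG p - conj (modelG p)) / conj p.2)) p := by
  rw [modelRho_eq]
  refine (((hasFDerivAt_modelG hp).add_wirtinger
    (hasFDerivAt_modelG hp).conj_wirtinger).const_mul_wirtinger _).congr_fderiv ?_
  congr 1 <;> ext <;>
    simp only [Prod.fst_add, Prod.snd_add, Prod.smul_fst, Prod.smul_snd, Prod.fst_star,
      Prod.snd_star, star_zero, star_div₀, star_neg, star_mul', RCLike.star_def, conj_I, conj_conj,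
      smul_eq_mul] <;>
    ring

theorem wd1_modelRho (hp : p.2 ≠ 0) : wd1 modelRho p = -(1 / 2) * modelPhase p.2 :=
  (hasFDerivAt_modelRho hp).wd1_eq

theorem wd2_modelRho (hp : p.2 ≠ 0) :
    wd2 modelRho p = I / 2 * (modelG p - conj (modelG p)) / p.2 :=
  (hasFDerivAt_modelRho hp).wd2_eq

theorem wd1bar_modelRho (hp : p.2 ≠ 0) :
    wd1bar modelRho p = -(1 / 2) * conj (modelPhase p.2) :=
  (hasFDerivAt_modelRho hp).wd1bar_eq

theorem wd2bar_modelRho (hp : p.2 ≠ 0) :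
    wd2bar modelRho p = I / 2 * (modelG p - conj (modelG p)) / conj p.2 :=
  (hasFDerivAt_modelRho hp).wd2bar_eq

theorem hasFDerivAt_wd1bar_modelRho (hp : p.2 ≠ 0) :
    ∃ b, HasFDerivAt (wd1bar modelRho)
      (wirtingerCLM (0, -(I / 2) * conj (modelPhase p.2) / p.2) b) p := by
  have h := ((hasFDerivAt_modelPhase_snd hp).conj_wirtinger.const_mul_wirtinger (-(1 / 2)))
    |>.congr_of_eventuallyEq (f₁ := wd1bar modelRho)
      ((eventually_snd_ne hp).mono fun q hq => wd1bar_modelRho hq)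
  refine ⟨_, h.congr_fderiv (congrArg₂ wirtingerCLM ?_ rfl)⟩
  ext
  · simp
  · simp only [one_div, neg_mul, neg_smul, Prod.snd_neg, Prod.smul_snd, Prod.snd_star, star_div₀,
      star_neg, star_mul', RCLike.star_def, conj_I, neg_neg, RingHomCompTriple.comp_apply,
      RingHom.id_apply, smul_eq_mul]
    ring

theorem hasFDerivAt_inv_conj_snd (hp : p.2 ≠ 0) :
    HasFDerivAt (fun z : ℂ × ℂ => (conj z.2)⁻¹) (wirtingerCLM 0 (0, -(conj p.2 ^ 2)⁻¹)) p :=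
  ((hasDerivAt_inv ((map_ne_zero _).2 hp)).comp_wirtinger
    hasFDerivAt_snd_wirtinger.conj_wirtinger).congr_fderiv (by congr 1 <;> ext <;> simp)

theorem hasFDerivAt_wd2bar_modelRho (hp : p.2 ≠ 0) :
    ∃ b, HasFDerivAt (wd2bar modelRho)
      (wirtingerCLM (I / 2 * modelPhase p.2 / conj p.2, -modelRho p / (p.2 * conj p.2)) b) p := by
  have h := (((hasFDerivAt_modelG hp).sub_wirtinger (hasFDerivAt_modelG hp).conj_wirtinger)
    |>.mul_wirtinger (hasFDerivAt_inv_conj_snd hp)).const_mul_wirtinger (I / 2)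
    |>.congr_of_eventuallyEq (f₁ := wd2bar modelRho)
      ((eventually_snd_ne hp).mono fun q hq => by rw [wd2bar_modelRho hq]; ring)
  refine ⟨_, h.congr_fderiv (congrArg₂ wirtingerCLM ?_ rfl)⟩
  have hconj : conj p.2 ≠ 0 := (map_ne_zero _).2 hp
  rw [modelRho_eq]
  ext
  · simp only [smul_zero, neg_mul, zero_add, Prod.smul_fst, Prod.fst_sub, Prod.fst_star, star_zero,
      sub_zero, smul_eq_mul]
    field_simp
  · simp only [smul_zero, neg_mul, zero_add, Prod.smul_snd, Prod.snd_sub, Prod.snd_star, star_div₀,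
      star_neg, star_mul', RCLike.star_def, conj_I, neg_neg, RingHomCompTriple.comp_apply,
      RingHom.id_apply, smul_eq_mul]
    field_simp
    linear_combination (-modelG p - conj (modelG p)) * I_sq

theorem feffermanMA_modelRho_eq_zero (hp : p.2 ≠ 0) : feffermanMA modelRho p = 0 := by
  obtain ⟨b₁, h₁⟩ := hasFDerivAt_wd1bar_modelRho hp
  obtain ⟨b₂, h₂⟩ := hasFDerivAt_wd2bar_modelRho hp
  rw [feffermanMA, Matrix.det_fin_three]
  simp only [Matrix.of_apply, Matrix.cons_val', Matrix.cons_val_zero, Matrix.cons_val_one,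
    Matrix.cons_val_two, Matrix.head_cons, Matrix.tail_cons, Matrix.empty_val',
    Matrix.cons_val_fin_one, Matrix.head_fin_const]
  rw [wd1_modelRho hp, wd2_modelRho hp, wd1bar_modelRho hp, wd2bar_modelRho hp, h₁.wd1_eq,
    h₁.wd2_eq, h₂.wd1_eq, h₂.wd2_eq]
  linear_combination
    (-modelRho p * modelPhase p.2 * conj (modelPhase p.2) / (4 * p.2 * conj p.2)) * I_sq

end ModelDerivatives

end

theorem feffermanMA_modelWorm_vanishes_general (μ : ℝ) :
    ∀ z : ℂ × ℂ, z.1 ≠ 0 → z.2 ≠ 0 → |Real.log (‖z.2‖ ^ 2)| < μ →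
      modelRho z = 0 → feffermanMA modelRho z = 0 :=
  fun _ _ hz₂ _ _ => feffermanMA_modelRho_eq_zero hz₂

/-- The Fefferman Monge–Ampère determinant of the defining function of `D_μ` vanishes
at every boundary point with `z₁ ≠ 0` and `ρ = 0` (the Levi-flat part of `∂D_μ`). -/
theorem feffermanMA_modelWorm_vanishes (μ : ℝ) (hμ : 0 < μ) :
    ∀ z : ℂ × ℂ, z.1 ≠ 0 → z.2 ≠ 0 → |Real.log (‖z.2‖ ^ 2)| < μ →
      modelRho z = 0 → feffermanMA modelRho z = 0 :=
  feffermanMA_modelWorm_vanishes_general μ
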